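/- Let τ < 0 and let θ : [0,∞) → ℝ be twice continuously differentiable with θ''(t) + τ·θ'(t) + θ(t)² − 1 = 0 for all t ≥ 0 and θ(t) → 1 as t → ∞. Then θ(t) = 1 for all t ≥ 0. -/

import Mathlib

/-!
The energy `E = θ'²/2 + V(θ)`, with `V(x) = x³/3 - x`, satisfies `E' = -τ θ'² ≥ 0`.
If `E(a) > -2/3 = V(1)` for some `a`, then, since `V(θ) → -2/3`, eventually `θ'²` stays above a
positive constant; by Darboux `θ'` then has a fixed sign, so `θ` drifts off linearly and cannot
tend to `1`. Hence `E ≤ -2/3` everywhere, and as `E + 2/3 = θ'²/2 + (θ - 1)²(θ + 2)/3`, this forces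
`θ(t) = 1` wherever `θ(t) > -2`. Since `θ` is continuous and eventually equal to `1`, the
intermediate value theorem rules out the values `≤ -2`.
-/

open Set Filter Topology

lemma monotoneOn_Ici_of_hasDerivWithinAt_nonneg {f f' : ℝ → ℝ} {a : ℝ}
    (hf : ∀ x ∈ Ici a, HasDerivWithinAt f (f' x) (Ici a) x) (hf' : ∀ x ∈ Ioi a, 0 ≤ f' x) :
    MonotoneOn f (Ici a) := by
  refine monotoneOn_of_hasDerivWithinAt_nonneg (f' := f') (convex_Ici a)
    (fun x hx => (hf x hx).continuousWithinAt) (fun x hx => ?_) (fun x hx => ?_)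
  · rw [interior_Ici] at hx ⊢
    exact (hf x (mem_Ici_of_Ioi hx)).mono Ioi_subset_Ici_self
  · rw [interior_Ici] at hx
    exact hf' x hx

lemma tendsto_atTop_of_le_hasDerivWithinAt {f f' : ℝ → ℝ} {a m : ℝ}
    (hf : ∀ x ∈ Ici a, HasDerivWithinAt f (f' x) (Ici a) x) (hm : 0 < m)
    (hle : ∀ x ∈ Ici a, m ≤ f' x) : Tendsto f atTop atTop := by
  have hmono : MonotoneOn (fun x => f x - m * x) (Ici a) :=
    monotoneOn_Ici_of_hasDerivWithinAt_nonneg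
      (fun x hx => (hf x hx).sub ((hasDerivAt_id x).const_mul m).hasDerivWithinAt)
      (fun x hx => by simpa using hle x (mem_Ici_of_Ioi hx))
  have hlin : Tendsto (fun x => m * x + (f a - m * a)) atTop atTop :=
    tendsto_atTop_add_const_right _ _ (tendsto_id.const_mul_atTop hm)
  refine tendsto_atTop_mono' _ ?_ hlin
  filter_upwards [eventually_ge_atTop a] with x hx
  linarith [hmono self_mem_Ici hx hx]

lemma not_tendsto_nhds_of_le_sq_hasDerivWithinAt {f f' : ℝ → ℝ} {a c l : ℝ}
    (hf : ∀ x ∈ Ici a, HasDerivWithinAt f (f' x) (Ici a) x) (hc : 0 < c)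
    (hle : ∀ x ∈ Ici a, c ≤ f' x ^ 2) : ¬Tendsto f atTop (𝓝 l) := by
  have hne : ∀ x ∈ Ici a, f' x ≠ 0 := fun x hx h0 => by
    have := hle x hx
    rw [h0] at this
    linarith
  have hsign : (∀ x ∈ Ici a, 0 < f' x) ∨ ∀ x ∈ Ici a, f' x < 0 := by
    by_contra! h
    obtain ⟨⟨x, hx, hx0⟩, y, hy, hy0⟩ := h
    obtain ⟨z, hz, hz0⟩ := (ordConnected_Ici.image_hasDerivWithinAt hf).out
      (mem_image_of_mem f' hx) (mem_image_of_mem f' hy) ⟨hx0, hy0⟩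
    exact hne z hz hz0
  have habs : ∀ x ∈ Ici a, √c ≤ |f' x| := fun x hx =>
    (Real.sqrt_le_sqrt (hle x hx)).trans_eq (Real.sqrt_sq_eq_abs _)
  rcases hsign with hpos | hneg
  · refine not_tendsto_nhds_of_tendsto_atTop
      (tendsto_atTop_of_le_hasDerivWithinAt hf (Real.sqrt_pos.2 hc) fun x hx => ?_) l
    simpa [abs_of_pos (hpos x hx)] using habs x hx
  · intro hlim
    refine not_tendsto_nhds_of_tendsto_atTop (tendsto_atTop_of_le_hasDerivWithinAt
      (fun x hx => (hf x hx).neg) (Real.sqrt_pos.2 hc) fun x hx => ?_) (-l) hlim.neg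
    simpa [abs_of_neg (hneg x hx)] using habs x hx

noncomputable def energy (θ θ' : ℝ → ℝ) (t : ℝ) : ℝ :=
  θ' t ^ 2 / 2 + θ t ^ 3 / 3 - θ t

section Energy

variable {τ : ℝ} {θ θ' θ'' : ℝ → ℝ}

lemma energy_add_two_thirds (t : ℝ) :
    energy θ θ' t + 2 / 3 = θ' t ^ 2 / 2 + (θ t - 1) ^ 2 * (θ t + 2) / 3 := by
  unfold energy
  ring

lemma eq_one_of_energy_le {t : ℝ} (hE : energy θ θ' t ≤ -2 / 3) (hθ : -2 < θ t) : θ t = 1 := by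
  have hid := energy_add_two_thirds (θ := θ) (θ' := θ') t
  have hsq : (θ t - 1) ^ 2 * (θ t + 2) ≤ 0 := by nlinarith [sq_nonneg (θ' t)]
  have : (θ t - 1) ^ 2 ≤ 0 := nonpos_of_mul_nonpos_left hsq (by linarith)
  nlinarith [sq_nonneg (θ t - 1)]

lemma hasDerivWithinAt_energy {s : Set ℝ} {t : ℝ} (h1 : HasDerivWithinAt θ (θ' t) s t)
    (h2 : HasDerivWithinAt θ' (θ'' t) s t)
    (heq : θ'' t + τ * θ' t + θ t ^ 2 - 1 = 0) :
    HasDerivWithinAt (energy θ θ') (-τ * θ' t ^ 2) s t := by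
  refine ((((h2.fun_pow 2).div_const 2).add ((h1.fun_pow 3).div_const 3)).sub h1).congr_deriv ?_
  push_cast
  linear_combination θ' t * heq

lemma monotoneOn_energy (hτ : τ ≤ 0)
    (hd1 : ∀ t ∈ Ici (0 : ℝ), HasDerivWithinAt θ (θ' t) (Ici 0) t)
    (hd2 : ∀ t ∈ Ici (0 : ℝ), HasDerivWithinAt θ' (θ'' t) (Ici 0) t)
    (heq : ∀ t : ℝ, 0 ≤ t → θ'' t + τ * θ' t + θ t ^ 2 - 1 = 0) :
    MonotoneOn (energy θ θ') (Ici 0) :=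
  monotoneOn_Ici_of_hasDerivWithinAt_nonneg
    (fun t ht => hasDerivWithinAt_energy (hd1 t ht) (hd2 t ht) (heq t ht))
    (fun _ _ => mul_nonneg (neg_nonneg.2 hτ) (sq_nonneg _))

lemma energy_le_neg_two_thirds (hτ : τ ≤ 0)
    (hd1 : ∀ t ∈ Ici (0 : ℝ), HasDerivWithinAt θ (θ' t) (Ici 0) t)
    (hd2 : ∀ t ∈ Ici (0 : ℝ), HasDerivWithinAt θ' (θ'' t) (Ici 0) t)
    (heq : ∀ t : ℝ, 0 ≤ t → θ'' t + τ * θ' t + θ t ^ 2 - 1 = 0)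
    (hlim : Tendsto θ atTop (𝓝 1)) :
    ∀ t ∈ Ici (0 : ℝ), energy θ θ' t ≤ -2 / 3 := by
  intro a ha
  by_contra! hlt
  have hmono := monotoneOn_energy hτ hd1 hd2 heq
  have hpot : Tendsto (fun t => θ t ^ 3 / 3 - θ t) atTop (𝓝 (-2 / 3)) := by
    convert ((hlim.pow 3).div_const 3).sub hlim using 2
    norm_num
  obtain ⟨b, hb⟩ := (hpot.eventually_lt_const
    (show -2 / 3 < (energy θ θ' a - 2 / 3) / 2 by linarith)).exists_forall_of_atTop
  have hab : Ici (max a b) ⊆ Ici 0 := Ici_subset_Ici.2 (ha.trans (le_max_left a b))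
  refine not_tendsto_nhds_of_le_sq_hasDerivWithinAt (a := max a b)
    (fun x hx => (hd1 x (hab hx)).mono hab) (show 0 < energy θ θ' a + 2 / 3 by linarith)
    (fun x hx => ?_) hlim
  have hEx := hmono ha (hab hx) (le_of_max_le_left hx)
  have hVx := hb x (le_of_max_le_right hx)
  unfold energy at hEx hVx ⊢
  linarith

end Energy

theorem stmt_13_general (τ : ℝ) (hτ : τ < 0) (θ θ' θ'' : ℝ → ℝ)
    (hd1 : ∀ t ∈ Ici (0 : ℝ), HasDerivWithinAt θ (θ' t) (Ici 0) t)
    (hd2 : ∀ t ∈ Ici (0 : ℝ), HasDerivWithinAt θ' (θ'' t) (Ici 0) t)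
    (heq : ∀ t : ℝ, 0 ≤ t → θ'' t + τ * θ' t + (θ t) ^ 2 - 1 = 0)
    (hlim : Tendsto θ atTop (nhds 1)) :
    ∀ t : ℝ, 0 ≤ t → θ t = 1 := by
  have hE := energy_le_neg_two_thirds hτ.le hd1 hd2 heq hlim
  have hone : ∀ t, 0 ≤ t → -2 < θ t → θ t = 1 := fun t ht => eq_one_of_energy_le (hE t ht)
  obtain ⟨T, hT2, hT0⟩ :=
    ((hlim.eventually_const_lt (by norm_num : (-2 : ℝ) < 1)).and (eventually_ge_atTop 0)).exists
  intro t ht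
  by_contra hne
  have hθt : θ t ≤ -2 := by
    by_contra! h
    exact hne (hone t ht h)
  have hsub : uIcc t T ⊆ Ici 0 := ordConnected_Ici.uIcc_subset ht hT0
  have hθc : ContinuousOn θ (Ici 0) := fun x hx => (hd1 x hx).continuousWithinAt
  obtain ⟨s, hs, hs1⟩ := intermediate_value_uIcc (hθc.mono hsub)
    (mem_uIcc_of_le (by linarith) (by rw [hone T hT0 hT2]; norm_num) : (-1 : ℝ) ∈ uIcc (θ t) (θ T))
  have := hone s (hsub hs) (by rw [hs1]; norm_num)
  linarith

/-- For `τ < 0` (injection), any twice continuously differentiable solution of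
`θ'' + τθ' + θ² - 1 = 0` on `[0,∞)` with `θ(t) → 1` at infinity is identically `1`. -/
theorem stmt_13 (τ : ℝ) (hτ : τ < 0) (θ θ' θ'' : ℝ → ℝ)
    (hd1 : ∀ t ∈ Ici (0 : ℝ), HasDerivWithinAt θ (θ' t) (Ici 0) t)
    (hd2 : ∀ t ∈ Ici (0 : ℝ), HasDerivWithinAt θ' (θ'' t) (Ici 0) t)
    (hc : ContinuousOn θ'' (Ici 0))
    (heq : ∀ t : ℝ, 0 ≤ t → θ'' t + τ * θ' t + (θ t) ^ 2 - 1 = 0)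
    (hlim : Tendsto θ atTop (nhds 1)) :
    ∀ t : ℝ, 0 ≤ t → θ t = 1 :=
  stmt_13_general τ hτ θ θ' θ'' hd1 hd2 heq hlim
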